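/- (Branching rule) Let γ ≤ γ̃ be compositions of n and α ≤ γ. Then R_α^{(γ)}(t) = Σ_{β ≥ α, D(α)\D(β) ⊆ D(γ)\D(γ̃)} t^{c(α,β^c)} R_β^{(γ̃)}(t), where R_α^{(γ)}(t) = Σ_{δ ≥ α, D(α)\D(δ) ⊆ D(γ)} t^{c(α,δ^c)} R_δ. -/

import Mathlib

open Finset

noncomputable section

/-- The field `ℚ(t)`. -/
abbrev Ft : Type := RatFunc ℚ

/-- The variable `t ∈ ℚ(t)`. -/
def tt : Ft := RatFunc.X

/-- Descent sets of compositions of `n` are subsets of `{1,...,n-1}`. -/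
def ground (n : ℕ) : Finset ℕ := Finset.Icc 1 (n - 1)

/-- `c(α,β) = Σ_{i ∈ D(α) ∩ D(β)} i`. -/
def cstat (A B : Finset ℕ) : ℕ := ∑ i ∈ A ∩ B, i

/-- The degree-`n` component of the free algebra `Sym_nc` is the free module with basis
`{h_α}` indexed by compositions of `n`, identified with their descent sets. -/
def h : Finset ℕ → (Finset ℕ →₀ Ft) := fun B => Finsupp.single B 1

/-- Ribbon Schur functions `R_α = Σ_{β ≥ α} (−1)^{ℓ(α)−ℓ(β)} h_β`; `β ≥ α` means
`D(β) ⊆ D(α)` and `ℓ(α) − ℓ(β) = |D(α)| − |D(β)|`. -/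
def Rib (A : Finset ℕ) : Finset ℕ →₀ Ft :=
  ∑ B ∈ A.powerset, ((-1 : Ft) ^ (A.card - B.card)) • h B

/-- Hall-Littlewood functions `H_α(t) = Σ_{β ≥ α} t^{c(α,β^c)} R_β`. -/
def HL (n : ℕ) (A : Finset ℕ) : Finset ℕ →₀ Ft :=
  ∑ B ∈ A.powerset, (tt ^ cstat A (ground n \ B)) • Rib B

/-- `γ`-ribbon Schur functions
`R_α^{(γ)}(t) = Σ_{β ≥ α, D(α)\D(β) ⊆ D(γ)} t^{c(α,β^c)} R_β`. -/
def gSchur (n : ℕ) (G A : Finset ℕ) : Finset ℕ →₀ Ft :=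
  ∑ B ∈ A.powerset.filter (fun B => A \ B ⊆ G), (tt ^ cstat A (ground n \ B)) • Rib B

/-!
Expanding each `R_β^{(γ̃)}(t)` turns the right side into a sum over pairs `δ ⊆ β ⊆ α` (as descent
sets). Under `γ̃ ⊆ γ ⊆ α` such a pair satisfies the constraints exactly when `β = δ ∪ γ̃` and `δ`
indexes the left side, and then the exponents add up: `c(α,β^c) + c(β,δ^c) = c(α,δ^c)`, since
`α \ δ` is the disjoint union of `α \ β` and `β \ δ`.
-/

theorem branching_pair_iff {α : Type*} [DecidableEq α] {A G Gt B D : Finset α}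
    (hGA : G ⊆ A) (hGt : Gt ⊆ G) :
    (B ⊆ A ∧ A \ B ⊆ G \ Gt) ∧ (D ⊆ B ∧ B \ D ⊆ Gt) ↔ B = D ∪ Gt ∧ (D ⊆ A ∧ A \ D ⊆ G) := by
  simp only [subset_iff, mem_sdiff, Finset.ext_iff, mem_union] at hGA hGt ⊢
  grind

theorem cstat_sdiff_of_subset {S X : Finset ℕ} (Y : Finset ℕ) (hX : X ⊆ S) :
    cstat X (S \ Y) = ∑ i ∈ X \ Y, i := by
  rw [cstat, ← inter_sdiff_assoc, inter_eq_left.mpr hX]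

theorem cstat_sdiff_add_cstat_sdiff {S A B D : Finset ℕ}
    (hDB : D ⊆ B) (hBA : B ⊆ A) (hA : A ⊆ S) :
    cstat A (S \ B) + cstat B (S \ D) = cstat A (S \ D) := by
  rw [cstat_sdiff_of_subset _ hA, cstat_sdiff_of_subset _ (hBA.trans hA),
    cstat_sdiff_of_subset _ hA, ← sdiff_sdiff_sdiff_cancel_right hDB]
  exact sum_sdiff (sdiff_subset_sdiff hBA le_rfl)

/-- Branching rule: for compositions `γ ≤ γ̃` of `n` (i.e. `D(γ̃) ⊆ D(γ)`) and `α ≤ γ`,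
`R_α^{(γ)}(t) = Σ_{β ≥ α, D(α)\D(β) ⊆ D(γ)\D(γ̃)} t^{c(α,β^c)} R_β^{(γ̃)}(t)`. -/
theorem stmt8 (n : ℕ) (G Gt A : Finset ℕ)
    (hA : A ⊆ ground n) (hGA : G ⊆ A) (hGt : Gt ⊆ G) :
    gSchur n G A = ∑ B ∈ A.powerset.filter (fun B => A \ B ⊆ G \ Gt),
      (tt ^ cstat A (ground n \ B)) • gSchur n Gt B := by
  simp only [gSchur, smul_sum, smul_smul, ← pow_add]
  rw [sum_comm' (t' := A.powerset.filter fun D => A \ D ⊆ G) (s' := fun D => {D ∪ Gt})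
    fun B D => by
      simpa only [mem_filter, mem_powerset, mem_singleton] using branching_pair_iff hGA hGt]
  refine sum_congr rfl fun D hD => ?_
  have hDA : D ⊆ A := mem_powerset.mp (mem_filter.mp hD).1
  rw [sum_singleton, cstat_sdiff_add_cstat_sdiff subset_union_left
    (union_subset hDA (hGt.trans hGA)) hA]
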